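/- For every real R, E_e(R,Q) = max over ρ ∈ [0,1] of { E₀(ρ,Q) − ρ·R }; moreover the minimum defining E_e(R,Q) is attained at a unique joint distribution, namely T_ρ∘V_ρ for some ρ ∈ [0,1] achieving the maximum. -/

import Mathlib

open scoped BigOperators
open Filter Topology

/-- `f` is a probability mass function on a finite alphabet. -/
def IsPMF {α : Type*} [Fintype α] (f : α → ℝ) : Prop :=
  (∀ a, 0 ≤ f a) ∧ ∑ a, f a = 1

/-- `P` is a discrete memoryless channel from `𝓧` to `𝓨`. -/
def IsChannel {𝓧 𝓨 : Type*} [Fintype 𝓧] [Fintype 𝓨] (P : 𝓧 → 𝓨 → ℝ) : Prop :=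
  ∀ x, IsPMF (P x)

/-- `V` is a conditional pmf on `𝓧` given `𝓨`. -/
def IsCondPMF {𝓧 𝓨 : Type*} [Fintype 𝓧] [Fintype 𝓨] (V : 𝓨 → 𝓧 → ℝ) : Prop :=
  ∀ y, IsPMF (V y)

/-- one term `s·log(s/t)` of a KL divergence, with the conventions
    `0·log(0/t) = 0` and `s·log(s/0) = +∞` for `s > 0`. -/
noncomputable def klTerm (s t : ℝ) : EReal :=
  if s = 0 then 0 else if t = 0 then ⊤ else ((s * Real.log (s / t) : ℝ) : EReal)

/-- `D(T∘V ‖ Q∘P)`. -/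
noncomputable def DQP {𝓧 𝓨 : Type*} [Fintype 𝓧] [Fintype 𝓨]
    (T : 𝓨 → ℝ) (V : 𝓨 → 𝓧 → ℝ) (Q : 𝓧 → ℝ) (P : 𝓧 → 𝓨 → ℝ) : EReal :=
  ∑ y, ∑ x, klTerm (T y * V y x) (Q x * P x y)

/-- `D(T∘V ‖ T×Q)`. -/
noncomputable def DTQ {𝓧 𝓨 : Type*} [Fintype 𝓧] [Fintype 𝓨]
    (T : 𝓨 → ℝ) (V : 𝓨 → 𝓧 → ℝ) (Q : 𝓧 → ℝ) : EReal :=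
  ∑ y, ∑ x, klTerm (T y * V y x) (T y * Q x)

/-- Gallager's function `E₀(ρ,Q)` (for `ρ > −1`). -/
noncomputable def E0 {𝓧 𝓨 : Type*} [Fintype 𝓧] [Fintype 𝓨]
    (ρ : ℝ) (Q : 𝓧 → ℝ) (P : 𝓧 → 𝓨 → ℝ) : ℝ :=
  - Real.log (∑ y, (∑ x, Q x * P x y ^ (1 / (1 + ρ))) ^ (1 + ρ))

/-- The joint distribution `T_ρ∘V_ρ` on `𝓧 × 𝓨` (for `ρ > −1`). -/
noncomputable def Jrho {𝓧 𝓨 : Type*} [Fintype 𝓧] [Fintype 𝓨]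
    (ρ : ℝ) (Q : 𝓧 → ℝ) (P : 𝓧 → 𝓨 → ℝ) (x : 𝓧) (y : 𝓨) : ℝ :=
  Q x * P x y ^ (1 / (1 + ρ)) * (∑ a, Q a * P a y ^ (1 / (1 + ρ))) ^ ρ /
    ∑ y', (∑ a, Q a * P a y' ^ (1 / (1 + ρ))) ^ (1 + ρ)

/-- `max_{x : Q(x) > 0} P(y|x)`. -/
noncomputable def maxP {𝓧 𝓨 : Type*} (Q : 𝓧 → ℝ) (P : 𝓧 → 𝓨 → ℝ) (y : 𝓨) : ℝ :=
  ⨆ x : {x // 0 < Q x}, P x.1 y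

/-- `E₀(−1,Q) = −log ∑_y max_{x : Q(x)>0} P(y|x)`. -/
noncomputable def E0m1 {𝓧 𝓨 : Type*} [Fintype 𝓧] [Fintype 𝓨]
    (Q : 𝓧 → ℝ) (P : 𝓧 → 𝓨 → ℝ) : ℝ :=
  - Real.log (∑ y, maxP Q P y)

/-- `E₀(ρ,Q)` extended to `ρ = −1`. -/
noncomputable def E0full {𝓧 𝓨 : Type*} [Fintype 𝓧] [Fintype 𝓨]
    (ρ : ℝ) (Q : 𝓧 → ℝ) (P : 𝓧 → 𝓨 → ℝ) : ℝ :=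
  if ρ = -1 then E0m1 Q P else E0 ρ Q P

/-- `T_{−1}(y) ∝ max_{a : Q(a)>0} P(y|a)`. -/
noncomputable def Tm1 {𝓧 𝓨 : Type*} [Fintype 𝓧] [Fintype 𝓨]
    (Q : 𝓧 → ℝ) (P : 𝓧 → 𝓨 → ℝ) (y : 𝓨) : ℝ :=
  maxP Q P y / ∑ y', maxP Q P y'

/-- `V` is admissible at `ρ = −1`: `V(x|y) = 0` for every `x` outside
    `argmax_{a : Q(a)>0} P(y|a)`. -/
def AdmissibleAtM1 {𝓧 𝓨 : Type*} [Fintype 𝓧] [Fintype 𝓨]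
    (Q : 𝓧 → ℝ) (P : 𝓧 → 𝓨 → ℝ) (V : 𝓨 → 𝓧 → ℝ) : Prop :=
  ∀ y x, ¬ (0 < Q x ∧ ∀ a, 0 < Q a → P a y ≤ P x y) → V y x = 0

/-- the error exponent `E_e(R,Q)`. -/
noncomputable def Ee {𝓧 𝓨 : Type*} [Fintype 𝓧] [Fintype 𝓨]
    (R : ℝ) (Q : 𝓧 → ℝ) (P : 𝓧 → 𝓨 → ℝ) : EReal :=
  sInf {v | ∃ T : 𝓨 → ℝ, ∃ V : 𝓨 → 𝓧 → ℝ, IsPMF T ∧ IsCondPMF V ∧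
    v = DQP T V Q P + max (DTQ T V Q - (R : EReal)) 0}

/-- the ML correct-decoding exponent `E_c^{ML}(R,Q)`. -/
noncomputable def EcML {𝓧 𝓨 : Type*} [Fintype 𝓧] [Fintype 𝓨]
    (R : ℝ) (Q : 𝓧 → ℝ) (P : 𝓧 → 𝓨 → ℝ) : EReal :=
  sInf {v | ∃ T : 𝓨 → ℝ, ∃ V : 𝓨 → 𝓧 → ℝ, IsPMF T ∧ IsCondPMF V ∧
    v = DQP T V Q P + max ((R : EReal) - DTQ T V Q) 0}

/-- the strict correct-decoding exponent `E_c(R,Q)` (`+∞` if infeasible). -/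
noncomputable def Ec {𝓧 𝓨 : Type*} [Fintype 𝓧] [Fintype 𝓨]
    (R : ℝ) (Q : 𝓧 → ℝ) (P : 𝓧 → 𝓨 → ℝ) : EReal :=
  sInf {v | ∃ T : 𝓨 → ℝ, ∃ V : 𝓨 → 𝓧 → ℝ, IsPMF T ∧ IsCondPMF V ∧
    (R : EReal) ≤ DTQ T V Q ∧ v = DQP T V Q P}

/-- the mutual information `I(Q∘P)`. -/
noncomputable def MI {𝓧 𝓨 : Type*} [Fintype 𝓧] [Fintype 𝓨]
    (Q : 𝓧 → ℝ) (P : 𝓧 → 𝓨 → ℝ) : ℝ :=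
  ∑ x, ∑ y, if Q x * P x y = 0 then 0
    else Q x * P x y * Real.log (P x y / ∑ a, Q a * P a y)

/-- the capacity `C(Z)` of the channel restricted to input letters in `Z`. -/
noncomputable def capacity {𝓧 𝓨 : Type*} [Fintype 𝓧] [Fintype 𝓨]
    (P : 𝓧 → 𝓨 → ℝ) (Z : Set 𝓧) : ℝ :=
  sSup {c | ∃ Q' : 𝓧 → ℝ, IsPMF Q' ∧ (∀ x, 0 < Q' x → x ∈ Z) ∧ c = MI Q' P}

/-- `R_{−1}^{−}(Q)`. -/
noncomputable def Rm1minus {𝓧 𝓨 : Type*} [Fintype 𝓧] [Fintype 𝓨]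
    (Q : 𝓧 → ℝ) (P : 𝓧 → 𝓨 → ℝ) : EReal :=
  sInf {v | ∃ V : 𝓨 → 𝓧 → ℝ, IsCondPMF V ∧ AdmissibleAtM1 Q P V ∧
    v = DTQ (Tm1 Q P) V Q}

/-- `R_{−1}^{+}(Q)`. -/
noncomputable def Rm1plus {𝓧 𝓨 : Type*} [Fintype 𝓧] [Fintype 𝓨]
    (Q : 𝓧 → ℝ) (P : 𝓧 → 𝓨 → ℝ) : EReal :=
  sSup {v | ∃ V : 𝓨 → 𝓧 → ℝ, IsCondPMF V ∧ AdmissibleAtM1 Q P V ∧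
    v = DTQ (Tm1 Q P) V Q}

/-- `F_ρ(T∘V, Q) = D(T∘V‖Q∘P) + ρ·D(T∘V‖T×Q)`. -/
noncomputable def Frho {𝓧 𝓨 : Type*} [Fintype 𝓧] [Fintype 𝓨]
    (ρ : ℝ) (T : 𝓨 → ℝ) (V : 𝓨 → 𝓧 → ℝ) (Q : 𝓧 → ℝ) (P : 𝓧 → 𝓨 → ℝ) : EReal :=
  DQP T V Q P + (ρ : EReal) * DTQ T V Q

/-- the unconstrained penalized minimum
    `min_{T,V} { D(T∘V‖Q∘P) + ρ·(D(T∘V‖T×Q) − R) }`. -/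
noncomputable def penMin {𝓧 𝓨 : Type*} [Fintype 𝓧] [Fintype 𝓨]
    (Q : 𝓧 → ℝ) (P : 𝓧 → 𝓨 → ℝ) (R ρ : ℝ) : EReal :=
  sInf {v | ∃ T : 𝓨 → ℝ, ∃ V : 𝓨 → 𝓧 → ℝ, IsPMF T ∧ IsCondPMF V ∧
    v = DQP T V Q P + (ρ : EReal) * (DTQ T V Q - (R : EReal))}

/-- the support-constrained penalized minimum
    `min_{T,V : supp(V) ⊆ supp(Q)} { D(T∘V‖Q∘P) − ρ·(R − D(T∘V‖T×Q)) }`. -/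
noncomputable def penMinS {𝓧 𝓨 : Type*} [Fintype 𝓧] [Fintype 𝓨]
    (Q : 𝓧 → ℝ) (P : 𝓧 → 𝓨 → ℝ) (R ρ : ℝ) : EReal :=
  sInf {v | ∃ T : 𝓨 → ℝ, ∃ V : 𝓨 → 𝓧 → ℝ, IsPMF T ∧ IsCondPMF V ∧
    (∀ y x, Q x = 0 → V y x = 0) ∧
    v = DQP T V Q P - (ρ : EReal) * ((R : EReal) - DTQ T V Q)}

/-!
For `0 ≤ ρ ≤ 1` and any `T∘V ≪ Q∘P`, the chain rule for logarithms gives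
`D(T∘V‖Q∘P) + ρ·D(T∘V‖T×Q) = E₀(ρ,Q) + D(T∘V‖T_ρ∘V_ρ) + ρ·∑_y T(y) D(V(·|y)‖V_ρ(·|y))`,
so the left side is at least `E₀(ρ,Q)`, with equality exactly at `T_ρ∘V_ρ`. Since
`|d − R|⁺ ≥ ρ·(d − R)`, every `E₀(ρ,Q) − ρR` is a lower bound for `E_e(R,Q)`. The rate
`s(ρ) = D(T_ρ∘V_ρ‖T_ρ×Q)` is continuous, so by the intermediate value theorem some
`ρ* ∈ [0,1]` satisfies `|s(ρ*) − R|⁺ = ρ*·(s(ρ*) − R)`; at that `ρ*` the objective at `T_ρ*∘V_ρ*`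
equals the lower bound `E₀(ρ*,Q) − ρ*R`, which is therefore both the minimum and the maximum,
and the equality case of the chain rule gives uniqueness of the minimiser.
-/

open Real InformationTheory Set

lemma mul_log_div_eq_sub_add_mul_klFun {a b : ℝ} (hab : b = 0 → a = 0) :
    a * log (a / b) = a - b + b * klFun (a / b) := by
  rcases eq_or_ne b 0 with rfl | hb
  · simp [hab rfl]
  · rw [klFun_apply]
    field_simp
    ring

lemma mul_klFun_div_nonneg {a b : ℝ} (ha : 0 ≤ a) (hb : 0 ≤ b) : 0 ≤ b * klFun (a / b) :=
  mul_nonneg hb (klFun_nonneg (div_nonneg ha hb))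

lemma mul_le_max_zero {ρ : ℝ} (hρ : ρ ∈ Icc (0 : ℝ) 1) (t : ℝ) : ρ * t ≤ max t 0 := by
  rcases le_total t 0 with ht | ht
  · exact (mul_nonpos_of_nonneg_of_nonpos hρ.1 ht).trans (le_max_right _ _)
  · exact (mul_le_of_le_one_left ht hρ.2).trans (le_max_left _ _)

section RelEntropy

variable {ι κ : Type*} [Fintype ι] [Fintype κ]

/-- Where `b i j = 0` the term is junk (`log (a / 0) = log 0 = 0`), so this is the relative entropy
only under `b i j = 0 → a i j = 0`, which every lemma below assumes. -/
noncomputable def relEntropy (a b : ι → κ → ℝ) : ℝ :=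
  ∑ i, ∑ j, a i j * log (a i j / b i j)

variable {a b : ι → κ → ℝ}

lemma relEntropy_eq_sub_add (hab : ∀ i j, b i j = 0 → a i j = 0) :
    relEntropy a b = ∑ i, ∑ j, a i j - ∑ i, ∑ j, b i j
      + ∑ i, ∑ j, b i j * klFun (a i j / b i j) := by
  calc relEntropy a b = ∑ i, ∑ j, (a i j - b i j + b i j * klFun (a i j / b i j)) :=
        Fintype.sum_congr _ _ fun i => Fintype.sum_congr _ _ fun j =>
          mul_log_div_eq_sub_add_mul_klFun (hab i j)
    _ = _ := by simp only [Finset.sum_add_distrib, Finset.sum_sub_distrib]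

theorem relEntropy_nonneg (ha : ∀ i j, 0 ≤ a i j) (hb : ∀ i j, 0 ≤ b i j)
    (hab : ∀ i j, b i j = 0 → a i j = 0) (hsum : ∑ i, ∑ j, b i j ≤ ∑ i, ∑ j, a i j) :
    0 ≤ relEntropy a b := by
  have hkl : 0 ≤ ∑ i, ∑ j, b i j * klFun (a i j / b i j) :=
    Finset.sum_nonneg fun i _ => Finset.sum_nonneg fun j _ => mul_klFun_div_nonneg (ha i j) (hb i j)
  rw [relEntropy_eq_sub_add hab]
  linarith

theorem eq_of_relEntropy_eq_zero (ha : ∀ i j, 0 ≤ a i j) (hb : ∀ i j, 0 ≤ b i j)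
    (hab : ∀ i j, b i j = 0 → a i j = 0) (hsum : ∑ i, ∑ j, b i j = ∑ i, ∑ j, a i j)
    (h : relEntropy a b = 0) : a = b := by
  rw [relEntropy_eq_sub_add hab, hsum, sub_self, zero_add] at h
  have hrow : ∀ i, 0 ≤ ∑ j, b i j * klFun (a i j / b i j) := fun i =>
    Finset.sum_nonneg fun j _ => mul_klFun_div_nonneg (ha i j) (hb i j)
  have hterm : ∀ i j, b i j * klFun (a i j / b i j) = 0 := fun i j =>
    (Finset.sum_eq_zero_iff_of_nonneg fun j _ => mul_klFun_div_nonneg (ha i j) (hb i j)).1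
      ((Finset.sum_eq_zero_iff_of_nonneg fun i _ => hrow i).1 h i (Finset.mem_univ i))
      j (Finset.mem_univ j)
  funext i j
  rcases mul_eq_zero.1 (hterm i j) with hb0 | hkl
  · rw [hb0, hab i j hb0]
  · rwa [klFun_eq_zero_iff (div_nonneg (ha i j) (hb i j)),
      div_eq_one_iff_eq fun hb0 => by simp [hb0, hab i j hb0] at hkl] at hkl

lemma relEntropy_self (a : ι → κ → ℝ) : relEntropy a a = 0 :=
  Finset.sum_eq_zero fun i _ => Finset.sum_eq_zero fun j _ => by
    rcases eq_or_ne (a i j) 0 with h | h <;> simp [h]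

end RelEntropy

lemma EReal.coe_finset_sum {ι : Type*} (s : Finset ι) (f : ι → ℝ) :
    ((∑ i ∈ s, f i : ℝ) : EReal) = ∑ i ∈ s, (f i : EReal) :=
  map_sum (⟨⟨(↑), EReal.coe_zero⟩, EReal.coe_add⟩ : ℝ →+ EReal) f s

lemma EReal.sum_ne_bot {ι : Type*} {s : Finset ι} {f : ι → EReal} (hf : ∀ i ∈ s, f i ≠ ⊥) :
    ∑ i ∈ s, f i ≠ ⊥ := fun h =>
  let ⟨i, hi, hfi⟩ := WithBot.sum_eq_bot_iff.1 h
  hf i hi hfi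

lemma EReal.sum_eq_top {ι : Type*} {s : Finset ι} {f : ι → EReal} (hf : ∀ i ∈ s, f i ≠ ⊥)
    {i : ι} (hi : i ∈ s) (hfi : f i = ⊤) : ∑ j ∈ s, f j = ⊤ := by
  classical
  rw [← Finset.add_sum_erase s f hi, hfi]
  exact EReal.top_add_of_ne_bot (EReal.sum_ne_bot fun j hj => hf j (Finset.mem_of_mem_erase hj))

lemma klTerm_ne_bot (s t : ℝ) : klTerm s t ≠ ⊥ := by
  unfold klTerm
  split_ifs
  · simp
  · simp
  · exact EReal.coe_ne_bot _

lemma klTerm_eq_coe {s t : ℝ} (h : t = 0 → s = 0) : klTerm s t = (s * log (s / t) : ℝ) := by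
  unfold klTerm
  split_ifs with hs ht
  · simp [hs]
  · exact absurd (h ht) hs
  · rfl

section Divergences

variable {𝓧 𝓨 : Type*} [Fintype 𝓧] [Fintype 𝓨]

def joint (T : 𝓨 → ℝ) (V : 𝓨 → 𝓧 → ℝ) (y : 𝓨) (x : 𝓧) : ℝ := T y * V y x

/-- `T∘V ≪ Q∘P`, the case in which `D(T∘V‖Q∘P)` and `D(T∘V‖T×Q)` are finite. -/
def JointAbsCont (T : 𝓨 → ℝ) (V : 𝓨 → 𝓧 → ℝ) (Q : 𝓧 → ℝ) (P : 𝓧 → 𝓨 → ℝ) : Prop :=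
  ∀ y x, Q x * P x y = 0 → T y * V y x = 0

variable {T : 𝓨 → ℝ} {V : 𝓨 → 𝓧 → ℝ} {Q : 𝓧 → ℝ} {P : 𝓧 → 𝓨 → ℝ}

lemma sum_joint (hT : IsPMF T) (hV : IsCondPMF V) : ∑ y, ∑ x, joint T V y x = 1 := by
  simp only [joint, ← Finset.mul_sum, (hV _).2, mul_one, hT.2]

lemma joint_nonneg (hT : IsPMF T) (hV : IsCondPMF V) (y : 𝓨) (x : 𝓧) : 0 ≤ joint T V y x :=
  mul_nonneg (hT.1 y) ((hV y).1 x)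

lemma DQP_eq_coe (hAC : JointAbsCont T V Q P) :
    DQP T V Q P = (relEntropy (joint T V) (fun y x => Q x * P x y) : EReal) := by
  simp only [DQP, relEntropy, joint, EReal.coe_finset_sum]
  exact Fintype.sum_congr _ _ fun y => Fintype.sum_congr _ _ fun x => klTerm_eq_coe (hAC y x)

lemma DTQ_eq_coe (hAC : JointAbsCont T V Q P) :
    DTQ T V Q = (relEntropy (joint T V) (joint T fun _ => Q) : EReal) := by
  simp only [DTQ, relEntropy, joint, EReal.coe_finset_sum]
  refine Fintype.sum_congr _ _ fun y => Fintype.sum_congr _ _ fun x => klTerm_eq_coe fun h => ?_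
  rcases mul_eq_zero.1 h with hT | hQ
  · simp [hT]
  · exact hAC y x (by simp [hQ])

lemma DQP_eq_top (hAC : ¬ JointAbsCont T V Q P) : DQP T V Q P = ⊤ := by
  simp only [JointAbsCont, not_forall] at hAC
  obtain ⟨y, x, hQP, hTV⟩ := hAC
  refine EReal.sum_eq_top (fun y _ => EReal.sum_ne_bot fun x _ => klTerm_ne_bot _ _)
    (Finset.mem_univ y) (EReal.sum_eq_top (fun x _ => klTerm_ne_bot _ _) (Finset.mem_univ x) ?_)
  simp [klTerm, hTV, hQP]

lemma DQP_add_max_eq_coe (hAC : JointAbsCont T V Q P) (R : ℝ) :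
    DQP T V Q P + max (DTQ T V Q - R) 0
      = ((relEntropy (joint T V) (fun y x => Q x * P x y)
          + max (relEntropy (joint T V) (joint T fun _ => Q) - R) 0 : ℝ) : EReal) := by
  rw [DQP_eq_coe hAC, DTQ_eq_coe hAC, EReal.coe_add, EReal.coe_strictMono.monotone.map_max,
    EReal.coe_sub, EReal.coe_zero]

lemma DQP_add_max_eq_top (hAC : ¬ JointAbsCont T V Q P) (R : ℝ) :
    DQP T V Q P + max (DTQ T V Q - R) 0 = ⊤ := by
  rw [DQP_eq_top hAC]
  exact EReal.top_add_of_ne_bot (ne_bot_of_le_ne_bot EReal.zero_ne_bot (le_max_right _ _))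

end Divergences

section Tilted

variable {𝓧 𝓨 : Type*} [Fintype 𝓧] [Fintype 𝓨] {Q : 𝓧 → ℝ} {P : 𝓧 → 𝓨 → ℝ} {ρ : ℝ}

noncomputable def tiltSum (ρ : ℝ) (Q : 𝓧 → ℝ) (P : 𝓧 → 𝓨 → ℝ) (y : 𝓨) : ℝ :=
  ∑ x, Q x * P x y ^ (1 / (1 + ρ))

noncomputable def tiltNorm (ρ : ℝ) (Q : 𝓧 → ℝ) (P : 𝓧 → 𝓨 → ℝ) : ℝ :=
  ∑ y, tiltSum ρ Q P y ^ (1 + ρ)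

noncomputable def tiltedT (ρ : ℝ) (Q : 𝓧 → ℝ) (P : 𝓧 → 𝓨 → ℝ) (y : 𝓨) : ℝ :=
  tiltSum ρ Q P y ^ (1 + ρ) / tiltNorm ρ Q P

/-- Where `tiltSum ρ Q P y = 0` we have `T_ρ(y) = 0`, and any pmf will do; we take `Q`. -/
noncomputable def tiltedV (ρ : ℝ) (Q : 𝓧 → ℝ) (P : 𝓧 → 𝓨 → ℝ) (y : 𝓨) (x : 𝓧) : ℝ :=
  if tiltSum ρ Q P y = 0 then Q x else Q x * P x y ^ (1 / (1 + ρ)) / tiltSum ρ Q P y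

lemma E0_eq_neg_log_tiltNorm : E0 ρ Q P = -log (tiltNorm ρ Q P) := rfl

lemma Jrho_eq (x : 𝓧) (y : 𝓨) :
    Jrho ρ Q P x y = Q x * P x y ^ (1 / (1 + ρ)) * tiltSum ρ Q P y ^ ρ / tiltNorm ρ Q P := rfl

lemma tilt_term_nonneg (hQ : IsPMF Q) (hP : IsChannel P) (x : 𝓧) (y : 𝓨) :
    0 ≤ Q x * P x y ^ (1 / (1 + ρ)) :=
  mul_nonneg (hQ.1 x) (rpow_nonneg ((hP x).1 y) _)

lemma tiltSum_nonneg (hQ : IsPMF Q) (hP : IsChannel P) (y : 𝓨) : 0 ≤ tiltSum ρ Q P y :=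
  Finset.sum_nonneg fun x _ => tilt_term_nonneg hQ hP x y

lemma tiltSum_pos (hQ : IsPMF Q) (hP : IsChannel P) {x : 𝓧} {y : 𝓨} (hq : 0 < Q x)
    (hp : 0 < P x y) : 0 < tiltSum ρ Q P y :=
  Finset.sum_pos' (fun a _ => tilt_term_nonneg hQ hP a y)
    ⟨x, Finset.mem_univ x, mul_pos hq (rpow_pos_of_pos hp _)⟩

lemma exists_pos_input_output (hQ : IsPMF Q) (hP : IsChannel P) :
    ∃ x y, 0 < Q x ∧ 0 < P x y := by
  obtain ⟨x, -, hx⟩ := Finset.exists_ne_zero_of_sum_ne_zero (hQ.2.symm ▸ one_ne_zero)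
  obtain ⟨y, -, hy⟩ := Finset.exists_ne_zero_of_sum_ne_zero ((hP x).2.symm ▸ one_ne_zero)
  exact ⟨x, y, (hQ.1 x).lt_of_ne' hx, ((hP x).1 y).lt_of_ne' hy⟩

lemma tiltNorm_pos (hQ : IsPMF Q) (hP : IsChannel P) : 0 < tiltNorm ρ Q P := by
  obtain ⟨x, y, hq, hp⟩ := exists_pos_input_output hQ hP
  exact Finset.sum_pos' (fun b _ => rpow_nonneg (tiltSum_nonneg hQ hP b) _)
    ⟨y, Finset.mem_univ y, rpow_pos_of_pos (tiltSum_pos hQ hP hq hp) _⟩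

lemma tiltedT_pos (hQ : IsPMF Q) (hP : IsChannel P) {x : 𝓧} {y : 𝓨} (hq : 0 < Q x)
    (hp : 0 < P x y) : 0 < tiltedT ρ Q P y :=
  div_pos (rpow_pos_of_pos (tiltSum_pos hQ hP hq hp) _) (tiltNorm_pos hQ hP)

lemma tiltedV_pos (hQ : IsPMF Q) (hP : IsChannel P) {x : 𝓧} {y : 𝓨} (hq : 0 < Q x)
    (hp : 0 < P x y) : 0 < tiltedV ρ Q P y x := by
  have hA := tiltSum_pos (ρ := ρ) hQ hP hq hp
  rw [tiltedV, if_neg hA.ne']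
  exact div_pos (mul_pos hq (rpow_pos_of_pos hp _)) hA

lemma Jrho_nonneg (hQ : IsPMF Q) (hP : IsChannel P) (x : 𝓧) (y : 𝓨) : 0 ≤ Jrho ρ Q P x y :=
  div_nonneg (mul_nonneg (tilt_term_nonneg hQ hP x y) (rpow_nonneg (tiltSum_nonneg hQ hP y) _))
    (tiltNorm_pos hQ hP).le

lemma Jrho_pos (hQ : IsPMF Q) (hP : IsChannel P) {x : 𝓧} {y : 𝓨} (hq : 0 < Q x)
    (hp : 0 < P x y) : 0 < Jrho ρ Q P x y :=
  div_pos (mul_pos (mul_pos hq (rpow_pos_of_pos hp _))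
    (rpow_pos_of_pos (tiltSum_pos hQ hP hq hp) _)) (tiltNorm_pos hQ hP)

lemma Jrho_eq_zero (hρ : -1 < ρ) {x : 𝓧} {y : 𝓨} (h : Q x * P x y = 0) : Jrho ρ Q P x y = 0 := by
  have hexp : 1 / (1 + ρ) ≠ 0 := one_div_ne_zero (by linarith)
  rcases mul_eq_zero.1 h with h | h
  · simp [Jrho_eq, h]
  · rw [Jrho_eq, h, zero_rpow hexp]
    simp

lemma tiltedT_mul_tiltedV (hQ : IsPMF Q) (hP : IsChannel P) (hρ : -1 < ρ) (x : 𝓧) (y : 𝓨) :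
    tiltedT ρ Q P y * tiltedV ρ Q P y x = Jrho ρ Q P x y := by
  rcases (tiltSum_nonneg (ρ := ρ) hQ hP y).eq_or_lt with hA | hA
  · have hterm : Q x * P x y ^ (1 / (1 + ρ)) = 0 :=
      (Finset.sum_eq_zero_iff_of_nonneg fun a _ => tilt_term_nonneg hQ hP a y).1 hA.symm x
        (Finset.mem_univ x)
    rw [tiltedT, Jrho_eq, hterm, ← hA, zero_rpow (by linarith : 1 + ρ ≠ 0)]
    simp
  · rw [tiltedT, tiltedV, if_neg hA.ne', Jrho_eq, rpow_add hA, rpow_one]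
    field_simp

lemma joint_tilted (hQ : IsPMF Q) (hP : IsChannel P) (hρ : -1 < ρ) :
    joint (tiltedT ρ Q P) (tiltedV ρ Q P) = fun y x => Jrho ρ Q P x y :=
  funext fun y => funext fun x => tiltedT_mul_tiltedV hQ hP hρ x y

lemma isPMF_tiltedT (hQ : IsPMF Q) (hP : IsChannel P) : IsPMF (tiltedT ρ Q P) :=
  ⟨fun y => div_nonneg (rpow_nonneg (tiltSum_nonneg hQ hP y) _) (tiltNorm_pos hQ hP).le, by
    simp only [tiltedT, ← Finset.sum_div]
    exact div_self (tiltNorm_pos hQ hP).ne'⟩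

lemma isCondPMF_tiltedV (hQ : IsPMF Q) (hP : IsChannel P) : IsCondPMF (tiltedV ρ Q P) := by
  intro y
  by_cases hA : tiltSum ρ Q P y = 0
  · rwa [show tiltedV ρ Q P y = Q from funext fun x => if_pos hA]
  · refine ⟨fun x => ?_, ?_⟩
    · simp only [tiltedV, if_neg hA]
      exact div_nonneg (tilt_term_nonneg hQ hP x y) (tiltSum_nonneg hQ hP y)
    · simp only [tiltedV, if_neg hA, ← Finset.sum_div]
      exact div_self hA

lemma jointAbsCont_tilted (hQ : IsPMF Q) (hP : IsChannel P) (hρ : -1 < ρ) :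
    JointAbsCont (tiltedT ρ Q P) (tiltedV ρ Q P) Q P := fun y x h => by
  rw [tiltedT_mul_tiltedV hQ hP hρ]
  exact Jrho_eq_zero hρ h

lemma sum_Jrho (hQ : IsPMF Q) (hP : IsChannel P) (hρ : -1 < ρ) :
    ∑ y, ∑ x, Jrho ρ Q P x y = 1 := by
  have h := sum_joint (isPMF_tiltedT (ρ := ρ) hQ hP) (isCondPMF_tiltedV (ρ := ρ) hQ hP)
  rwa [joint_tilted hQ hP hρ] at h

lemma log_Jrho (hQ : IsPMF Q) (hP : IsChannel P) {x : 𝓧} {y : 𝓨} (hq : 0 < Q x)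
    (hp : 0 < P x y) : log (Jrho ρ Q P x y)
      = log (Q x) + log (P x y) / (1 + ρ) + ρ * log (tiltSum ρ Q P y) - log (tiltNorm ρ Q P) := by
  have hA := tiltSum_pos (ρ := ρ) hQ hP hq hp
  rw [Jrho_eq, log_div (mul_pos (mul_pos hq (rpow_pos_of_pos hp _)) (rpow_pos_of_pos hA _)).ne'
    (tiltNorm_pos hQ hP).ne', log_mul (mul_pos hq (rpow_pos_of_pos hp _)).ne'
    (rpow_pos_of_pos hA _).ne', log_mul hq.ne' (rpow_pos_of_pos hp _).ne', log_rpow hp,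
    log_rpow hA]
  ring

lemma log_tiltedV (hQ : IsPMF Q) (hP : IsChannel P) {x : 𝓧} {y : 𝓨} (hq : 0 < Q x)
    (hp : 0 < P x y) :
    log (tiltedV ρ Q P y x) = log (Q x) + log (P x y) / (1 + ρ) - log (tiltSum ρ Q P y) := by
  have hA := tiltSum_pos (ρ := ρ) hQ hP hq hp
  rw [tiltedV, if_neg hA.ne', log_div (mul_pos hq (rpow_pos_of_pos hp _)).ne' hA.ne',
    log_mul hq.ne' (rpow_pos_of_pos hp _).ne', log_rpow hp]
  ring

end Tilted

section ChainRule

variable {𝓧 𝓨 : Type*} [Fintype 𝓧] [Fintype 𝓨] {Q : 𝓧 → ℝ} {P : 𝓧 → 𝓨 → ℝ} {ρ : ℝ}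
  {T : 𝓨 → ℝ} {V : 𝓨 → 𝓧 → ℝ}

lemma pos_of_joint_ne_zero (hQ : IsPMF Q) (hP : IsChannel P) (hAC : JointAbsCont T V Q P)
    {y : 𝓨} {x : 𝓧} (h : joint T V y x ≠ 0) : 0 < Q x ∧ 0 < P x y := by
  have hQP : Q x * P x y ≠ 0 := fun h0 => h (hAC y x h0)
  exact ⟨(hQ.1 x).lt_of_ne' (left_ne_zero_of_mul hQP),
    ((hP x).1 y).lt_of_ne' (right_ne_zero_of_mul hQP)⟩

lemma mul_log_chain_rule (hQ : IsPMF Q) (hP : IsChannel P) (hρ : -1 < ρ)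
    (hAC : JointAbsCont T V Q P) (y : 𝓨) (x : 𝓧) :
    joint T V y x * log (joint T V y x / (Q x * P x y))
        + ρ * (joint T V y x * log (joint T V y x / joint T (fun _ => Q) y x))
      = joint T V y x * E0 ρ Q P + joint T V y x * log (joint T V y x / Jrho ρ Q P x y)
        + ρ * (joint T V y x * log (joint T V y x / joint T (tiltedV ρ Q P) y x)) := by
  rcases eq_or_ne (joint T V y x) 0 with ha | ha
  · simp [ha]
  obtain ⟨hq, hp⟩ := pos_of_joint_ne_zero hQ hP hAC ha
  have hv := tiltedV_pos (ρ := ρ) hQ hP hq hp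
  have ht : T y ≠ 0 := left_ne_zero_of_mul ha
  unfold joint at ha ⊢
  rw [log_div ha (mul_pos hq hp).ne', log_div ha (mul_ne_zero ht hq.ne'),
    log_div ha (Jrho_pos hQ hP hq hp).ne', log_div ha (mul_ne_zero ht hv.ne'),
    log_mul hq.ne' hp.ne', log_mul ht hq.ne', log_mul ht hv.ne', log_Jrho hQ hP hq hp,
    log_tiltedV hQ hP hq hp, E0_eq_neg_log_tiltNorm]
  field_simp [show 1 + ρ ≠ 0 by linarith]
  ring

theorem relEntropy_chain_rule (hQ : IsPMF Q) (hP : IsChannel P) (hρ : -1 < ρ)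
    (hT : IsPMF T) (hV : IsCondPMF V) (hAC : JointAbsCont T V Q P) :
    relEntropy (joint T V) (fun y x => Q x * P x y)
        + ρ * relEntropy (joint T V) (joint T fun _ => Q)
      = E0 ρ Q P + relEntropy (joint T V) (fun y x => Jrho ρ Q P x y)
        + ρ * relEntropy (joint T V) (joint T (tiltedV ρ Q P)) := by
  have hE0 : E0 ρ Q P = ∑ y, ∑ x, joint T V y x * E0 ρ Q P := by
    simp only [← Finset.sum_mul, sum_joint hT hV, one_mul]
  rw [hE0]
  simp only [relEntropy, Finset.mul_sum, ← Finset.sum_add_distrib]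
  exact Fintype.sum_congr _ _ fun y => Fintype.sum_congr _ _ fun x =>
    mul_log_chain_rule hQ hP hρ hAC y x

lemma joint_eq_zero_of_Jrho_eq_zero (hQ : IsPMF Q) (hP : IsChannel P)
    (hAC : JointAbsCont T V Q P) (y : 𝓨) (x : 𝓧) (h : Jrho ρ Q P x y = 0) :
    joint T V y x = 0 := by
  by_contra ha
  obtain ⟨hq, hp⟩ := pos_of_joint_ne_zero hQ hP hAC ha
  exact (Jrho_pos hQ hP hq hp).ne' h

lemma relEntropy_Jrho_nonneg (hQ : IsPMF Q) (hP : IsChannel P) (hρ : -1 < ρ)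
    (hT : IsPMF T) (hV : IsCondPMF V) (hAC : JointAbsCont T V Q P) :
    0 ≤ relEntropy (joint T V) (fun y x => Jrho ρ Q P x y) :=
  relEntropy_nonneg (joint_nonneg hT hV) (fun y x => Jrho_nonneg hQ hP x y)
    (joint_eq_zero_of_Jrho_eq_zero hQ hP hAC) (by rw [sum_Jrho hQ hP hρ, sum_joint hT hV])

lemma relEntropy_tiltedV_nonneg (hQ : IsPMF Q) (hP : IsChannel P) (hT : IsPMF T)
    (hV : IsCondPMF V) (hAC : JointAbsCont T V Q P) :
    0 ≤ relEntropy (joint T V) (joint T (tiltedV ρ Q P)) := by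
  refine relEntropy_nonneg (joint_nonneg hT hV) (joint_nonneg hT (isCondPMF_tiltedV hQ hP))
    (fun y x h => ?_) (by rw [sum_joint hT (isCondPMF_tiltedV hQ hP), sum_joint hT hV])
  by_contra ha
  obtain ⟨hq, hp⟩ := pos_of_joint_ne_zero hQ hP hAC ha
  exact mul_ne_zero (left_ne_zero_of_mul ha) (tiltedV_pos hQ hP hq hp).ne' h

theorem E0_le_relEntropy (hQ : IsPMF Q) (hP : IsChannel P) (hρ : 0 ≤ ρ) (hT : IsPMF T)
    (hV : IsCondPMF V) (hAC : JointAbsCont T V Q P) :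
    E0 ρ Q P ≤ relEntropy (joint T V) (fun y x => Q x * P x y)
      + ρ * relEntropy (joint T V) (joint T fun _ => Q) := by
  have hρ' : -1 < ρ := by linarith
  rw [relEntropy_chain_rule hQ hP hρ' hT hV hAC]
  have hJ := relEntropy_Jrho_nonneg hQ hP hρ' hT hV hAC
  have hV' := relEntropy_tiltedV_nonneg (ρ := ρ) hQ hP hT hV hAC
  nlinarith

theorem joint_eq_Jrho_of_relEntropy_eq_E0 (hQ : IsPMF Q) (hP : IsChannel P) (hρ : 0 ≤ ρ)
    (hT : IsPMF T) (hV : IsCondPMF V) (hAC : JointAbsCont T V Q P)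
    (h : relEntropy (joint T V) (fun y x => Q x * P x y)
      + ρ * relEntropy (joint T V) (joint T fun _ => Q) = E0 ρ Q P) :
    joint T V = fun y x => Jrho ρ Q P x y := by
  have hρ' : -1 < ρ := by linarith
  rw [relEntropy_chain_rule hQ hP hρ' hT hV hAC] at h
  have hJ := relEntropy_Jrho_nonneg hQ hP hρ' hT hV hAC
  have hV' := relEntropy_tiltedV_nonneg (ρ := ρ) hQ hP hT hV hAC
  refine eq_of_relEntropy_eq_zero (joint_nonneg hT hV) (fun y x => Jrho_nonneg hQ hP x y)
    (joint_eq_zero_of_Jrho_eq_zero hQ hP hAC) (by rw [sum_Jrho hQ hP hρ', sum_joint hT hV]) ?_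
  nlinarith

/-- `s(ρ) = D(T_ρ∘V_ρ‖T_ρ×Q)`. -/
noncomputable def tiltedRate (ρ : ℝ) (Q : 𝓧 → ℝ) (P : 𝓧 → 𝓨 → ℝ) : ℝ :=
  relEntropy (fun y x => Jrho ρ Q P x y) (joint (tiltedT ρ Q P) fun _ => Q)

lemma relEntropy_Jrho_add_mul_tiltedRate (hQ : IsPMF Q) (hP : IsChannel P) (hρ : -1 < ρ) :
    relEntropy (fun y x => Jrho ρ Q P x y) (fun y x => Q x * P x y) + ρ * tiltedRate ρ Q P
      = E0 ρ Q P := by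
  have h := relEntropy_chain_rule hQ hP hρ (isPMF_tiltedT hQ hP) (isCondPMF_tiltedV hQ hP)
    (jointAbsCont_tilted hQ hP hρ)
  rw [joint_tilted hQ hP hρ, relEntropy_self] at h
  simpa [tiltedRate] using h

end ChainRule

section Continuity

variable {𝓧 𝓨 : Type*} [Fintype 𝓧] {Q : 𝓧 → ℝ} {P : 𝓧 → 𝓨 → ℝ} {ρ₀ : ℝ}

lemma continuousAt_rpow_one_div_one_add (c : ℝ) (hρ₀ : -1 < ρ₀) :
    ContinuousAt (fun ρ : ℝ => c ^ (1 / (1 + ρ))) ρ₀ :=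
  continuousAt_const.rpow (continuousAt_const.div (continuousAt_const.add continuousAt_id)
    (by linarith)) (Or.inr (one_div_pos.2 (by linarith)))

lemma continuousAt_tiltSum (hρ₀ : -1 < ρ₀) (y : 𝓨) :
    ContinuousAt (fun ρ => tiltSum ρ Q P y) ρ₀ :=
  tendsto_finsetSum _ fun _ _ => continuousAt_const.mul (continuousAt_rpow_one_div_one_add _ hρ₀)

lemma continuousAt_tiltSum_rpow_one_add (hρ₀ : -1 < ρ₀) (y : 𝓨) :
    ContinuousAt (fun ρ => tiltSum ρ Q P y ^ (1 + ρ)) ρ₀ :=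
  (continuousAt_tiltSum hρ₀ y).rpow (continuousAt_const.add continuousAt_id)
    (Or.inr (by linarith))

variable [Fintype 𝓨]

lemma continuousAt_tiltNorm (hρ₀ : -1 < ρ₀) : ContinuousAt (fun ρ => tiltNorm ρ Q P) ρ₀ :=
  tendsto_finsetSum _ fun y _ => continuousAt_tiltSum_rpow_one_add hρ₀ y

lemma continuousAt_tiltedT (hQ : IsPMF Q) (hP : IsChannel P) (hρ₀ : -1 < ρ₀) (y : 𝓨) :
    ContinuousAt (fun ρ => tiltedT ρ Q P y) ρ₀ :=
  (continuousAt_tiltSum_rpow_one_add hρ₀ y).div (continuousAt_tiltNorm hρ₀)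
    (tiltNorm_pos hQ hP).ne'

lemma continuousAt_Jrho (hQ : IsPMF Q) (hP : IsChannel P) (hρ₀ : -1 < ρ₀) {x : 𝓧} {y : 𝓨}
    (hq : 0 < Q x) (hp : 0 < P x y) : ContinuousAt (fun ρ => Jrho ρ Q P x y) ρ₀ :=
  ((continuousAt_const.mul (continuousAt_rpow_one_div_one_add _ hρ₀)).mul
    ((continuousAt_tiltSum hρ₀ y).rpow continuousAt_id
      (Or.inl (tiltSum_pos hQ hP hq hp).ne'))).div
    (continuousAt_tiltNorm hρ₀) (tiltNorm_pos hQ hP).ne'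

lemma continuousAt_tiltedRate (hQ : IsPMF Q) (hP : IsChannel P) (hρ₀ : -1 < ρ₀) :
    ContinuousAt (tiltedRate · Q P) ρ₀ := by
  refine tendsto_finsetSum _ fun y _ => tendsto_finsetSum _ fun x _ => ?_
  change ContinuousAt (fun ρ => Jrho ρ Q P x y * log (Jrho ρ Q P x y / (tiltedT ρ Q P y * Q x))) ρ₀
  by_cases h : 0 < Q x ∧ 0 < P x y
  · obtain ⟨hq, hp⟩ := h
    have hJ := continuousAt_Jrho hQ hP hρ₀ hq hp
    have hden : tiltedT ρ₀ Q P y * Q x ≠ 0 := (mul_pos (tiltedT_pos hQ hP hq hp) hq).ne'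
    exact hJ.mul ((hJ.div ((continuousAt_tiltedT hQ hP hρ₀ y).mul continuousAt_const) hden).log
      (div_ne_zero (Jrho_pos hQ hP hq hp).ne' hden))
  · have hQP : Q x * P x y = 0 := by
      rcases not_and_or.1 h with hq | hp
      · rw [le_antisymm (not_lt.1 hq) (hQ.1 x), zero_mul]
      · rw [le_antisymm (not_lt.1 hp) ((hP x).1 y), mul_zero]
    refine (continuousAt_const : ContinuousAt (fun _ : ℝ => (0 : ℝ)) ρ₀).congr ?_
    filter_upwards [Ioi_mem_nhds hρ₀] with ρ hρ
    simp [Jrho_eq_zero hρ hQP]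

lemma continuousOn_tiltedRate (hQ : IsPMF Q) (hP : IsChannel P) :
    ContinuousOn (tiltedRate · Q P) (Icc 0 1) := fun _ hρ =>
  (continuousAt_tiltedRate hQ hP (by linarith [hρ.1])).continuousWithinAt

end Continuity

lemma exists_mem_Icc_max_sub_eq_mul {s : ℝ → ℝ} (hs : ContinuousOn s (Icc 0 1)) (R : ℝ) :
    ∃ ρ ∈ Icc (0 : ℝ) 1, max (s ρ - R) 0 = ρ * (s ρ - R) := by
  by_cases h0 : s 0 ≤ R
  · exact ⟨0, left_mem_Icc.2 zero_le_one, by simp [h0]⟩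
  by_cases h1 : R ≤ s 1
  · exact ⟨1, right_mem_Icc.2 zero_le_one, by simp [h1]⟩
  obtain ⟨ρ, hρ, hsρ⟩ := intermediate_value_Icc' zero_le_one hs
    ⟨(not_le.1 h1).le, (not_le.1 h0).le⟩
  exact ⟨ρ, hρ, by simp [hsρ]⟩

section ErrorExponent

variable {𝓧 𝓨 : Type*} [Fintype 𝓧] [Fintype 𝓨] {Q : 𝓧 → ℝ} {P : 𝓧 → 𝓨 → ℝ} {ρ R : ℝ}
  {T : 𝓨 → ℝ} {V : 𝓨 → 𝓧 → ℝ}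

theorem coe_E0_sub_mul_le (hQ : IsPMF Q) (hP : IsChannel P) (hρ : ρ ∈ Icc (0 : ℝ) 1)
    (hT : IsPMF T) (hV : IsCondPMF V) :
    ((E0 ρ Q P - ρ * R : ℝ) : EReal) ≤ DQP T V Q P + max (DTQ T V Q - R) 0 := by
  by_cases hAC : JointAbsCont T V Q P
  · rw [DQP_add_max_eq_coe hAC, EReal.coe_le_coe_iff]
    have hE0 := E0_le_relEntropy hQ hP hρ.1 hT hV hAC
    have hmax := mul_le_max_zero hρ (relEntropy (joint T V) (joint T fun _ => Q) - R)
    linarith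
  · rw [DQP_add_max_eq_top hAC]
    exact le_top

theorem coe_E0_sub_mul_le_Ee (hQ : IsPMF Q) (hP : IsChannel P) (hρ : ρ ∈ Icc (0 : ℝ) 1) :
    ((E0 ρ Q P - ρ * R : ℝ) : EReal) ≤ Ee R Q P :=
  le_sInf fun _ ⟨_, _, hT, hV, hv⟩ => hv ▸ coe_E0_sub_mul_le hQ hP hρ hT hV

lemma tilted_objective_eq (hQ : IsPMF Q) (hP : IsChannel P) (hρ : -1 < ρ)
    (hslack : max (tiltedRate ρ Q P - R) 0 = ρ * (tiltedRate ρ Q P - R)) :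
    DQP (tiltedT ρ Q P) (tiltedV ρ Q P) Q P + max (DTQ (tiltedT ρ Q P) (tiltedV ρ Q P) Q - R) 0
      = ((E0 ρ Q P - ρ * R : ℝ) : EReal) := by
  have hE0 := relEntropy_Jrho_add_mul_tiltedRate hQ hP hρ
  rw [DQP_add_max_eq_coe (jointAbsCont_tilted hQ hP hρ), joint_tilted hQ hP hρ,
    EReal.coe_eq_coe_iff]
  unfold tiltedRate at hslack hE0
  rw [hslack]
  linarith

theorem joint_eq_Jrho_of_objective_eq (hQ : IsPMF Q) (hP : IsChannel P)
    (hρ : ρ ∈ Icc (0 : ℝ) 1) (hT : IsPMF T) (hV : IsCondPMF V)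
    (h : DQP T V Q P + max (DTQ T V Q - R) 0 = ((E0 ρ Q P - ρ * R : ℝ) : EReal)) (x : 𝓧) (y : 𝓨) :
    T y * V y x = Jrho ρ Q P x y := by
  by_cases hAC : JointAbsCont T V Q P
  · rw [DQP_add_max_eq_coe hAC, EReal.coe_eq_coe_iff] at h
    have hE0 := E0_le_relEntropy hQ hP hρ.1 hT hV hAC
    have hmax := mul_le_max_zero hρ (relEntropy (joint T V) (joint T fun _ => Q) - R)
    exact congr_fun (congr_fun (joint_eq_Jrho_of_relEntropy_eq_E0 hQ hP hρ.1 hT hV hAC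
      (by linarith)) y) x
  · rw [DQP_add_max_eq_top hAC] at h
    exact absurd h (EReal.top_ne_coe _)

end ErrorExponent

theorem stmt_4_general {𝓧 𝓨 : Type*} [Fintype 𝓧] [Fintype 𝓨]
    (P : 𝓧 → 𝓨 → ℝ) (hP : IsChannel P) (Q : 𝓧 → ℝ) (hQ : IsPMF Q) (R : ℝ) :
    Ee R Q P
      = ((sSup {e : ℝ | ∃ ρ ∈ Set.Icc (0 : ℝ) 1, e = E0 ρ Q P - ρ * R} : ℝ) : EReal)
    ∧ ∃ ρ ∈ Set.Icc (0 : ℝ) 1,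
        E0 ρ Q P - ρ * R
          = sSup {e : ℝ | ∃ ρ' ∈ Set.Icc (0 : ℝ) 1, e = E0 ρ' Q P - ρ' * R}
        ∧ (∃ T : 𝓨 → ℝ, ∃ V : 𝓨 → 𝓧 → ℝ, IsPMF T ∧ IsCondPMF V ∧
            DQP T V Q P + max (DTQ T V Q - (R : EReal)) 0 = Ee R Q P ∧
            ∀ x y, T y * V y x = Jrho ρ Q P x y)
        ∧ (∀ (T : 𝓨 → ℝ) (V : 𝓨 → 𝓧 → ℝ), IsPMF T → IsCondPMF V →
            DQP T V Q P + max (DTQ T V Q - (R : EReal)) 0 = Ee R Q P →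
            ∀ x y, T y * V y x = Jrho ρ Q P x y) := by
  obtain ⟨ρ, hρ, hslack⟩ := exists_mem_Icc_max_sub_eq_mul (continuousOn_tiltedRate hQ hP) R
  have hρ' : -1 < ρ := by linarith [hρ.1]
  have hval := tilted_objective_eq hQ hP hρ' hslack
  have hEe : Ee R Q P = ((E0 ρ Q P - ρ * R : ℝ) : EReal) :=
    le_antisymm (sInf_le ⟨_, _, isPMF_tiltedT hQ hP, isCondPMF_tiltedV hQ hP, hval.symm⟩)
      (coe_E0_sub_mul_le_Ee hQ hP hρ)
  have hSup : sSup {e : ℝ | ∃ ρ' ∈ Icc (0 : ℝ) 1, e = E0 ρ' Q P - ρ' * R} = E0 ρ Q P - ρ * R :=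
    IsGreatest.csSup_eq ⟨⟨ρ, hρ, rfl⟩, fun _ ⟨ρ', hρ', he⟩ =>
      he ▸ EReal.coe_le_coe_iff.1 (hEe ▸ coe_E0_sub_mul_le_Ee hQ hP hρ')⟩
  refine ⟨by rw [hEe, hSup], ρ, hρ, hSup.symm,
    ⟨_, _, isPMF_tiltedT hQ hP, isCondPMF_tiltedV hQ hP, hval.trans hEe.symm,
      tiltedT_mul_tiltedV hQ hP hρ'⟩,
    fun T V hT hV h => joint_eq_Jrho_of_objective_eq hQ hP hρ hT hV (h.trans hEe)⟩

theorem stmt_4 {𝓧 𝓨 : Type*} [Fintype 𝓧] [Fintype 𝓨] [Nonempty 𝓧] [Nonempty 𝓨]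
    (P : 𝓧 → 𝓨 → ℝ) (hP : IsChannel P) (Q : 𝓧 → ℝ) (hQ : IsPMF Q) (R : ℝ) :
    Ee R Q P
      = ((sSup {e : ℝ | ∃ ρ ∈ Set.Icc (0 : ℝ) 1, e = E0 ρ Q P - ρ * R} : ℝ) : EReal)
    ∧ ∃ ρ ∈ Set.Icc (0 : ℝ) 1,
        E0 ρ Q P - ρ * R
          = sSup {e : ℝ | ∃ ρ' ∈ Set.Icc (0 : ℝ) 1, e = E0 ρ' Q P - ρ' * R}
        ∧ (∃ T : 𝓨 → ℝ, ∃ V : 𝓨 → 𝓧 → ℝ, IsPMF T ∧ IsCondPMF V ∧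
            DQP T V Q P + max (DTQ T V Q - (R : EReal)) 0 = Ee R Q P ∧
            ∀ x y, T y * V y x = Jrho ρ Q P x y)
        ∧ (∀ (T : 𝓨 → ℝ) (V : 𝓨 → 𝓧 → ℝ), IsPMF T → IsCondPMF V →
            DQP T V Q P + max (DTQ T V Q - (R : EReal)) 0 = Ee R Q P →
            ∀ x y, T y * V y x = Jrho ρ Q P x y) :=
  stmt_4_general P hP Q hQ R
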